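/- arXiv:2207.00979 — 8 statements merged into one kernel-verified Lean document; each statement's English description precedes it below -/
import Mathlib

section
/- Let G be a group and P ⊆ G a subset satisfying: (P1) P is a subsemigroup; (P2) P ∩ P⁻¹ is a subgroup; (P3) G = P⁻¹·P; (P4) P·P⁻¹ ⊆ P ∪ P⁻¹. Define x ≼ y iff x⁻¹y ∈ P. Then ≼ is a left-invariant preorder on G satisfying (O6): any two elements below a common element are comparable, and (O7): any two elements have a common lower bound. -/
theorem stmt_4 {G : Type*} [Group G] (P : Set G)
    (hP1 : ∀ a ∈ P, ∀ b ∈ P, a * b ∈ P)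
    (hP2 : ∃ H : Subgroup G, (H : Set G) = P ∩ {g : G | g⁻¹ ∈ P})
    (hP3 : ∀ g : G, ∃ a b : G, a⁻¹ ∈ P ∧ b ∈ P ∧ g = a * b)
    (hP4 : ∀ x ∈ P, ∀ y ∈ P, x * y⁻¹ ∈ P ∨ (x * y⁻¹)⁻¹ ∈ P) :
    (∀ x : G, x⁻¹ * x ∈ P) ∧
    (∀ x y z : G, x⁻¹ * y ∈ P → y⁻¹ * z ∈ P → x⁻¹ * z ∈ P) ∧
    (∀ g x y : G, x⁻¹ * y ∈ P → (g * x)⁻¹ * (g * y) ∈ P) ∧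
    (∀ x y z : G, y⁻¹ * x ∈ P → z⁻¹ * x ∈ P → (y⁻¹ * z ∈ P ∨ z⁻¹ * y ∈ P)) ∧
    (∀ x y : G, ∃ z : G, z⁻¹ * x ∈ P ∧ z⁻¹ * y ∈ P) := by
  have hone : (1 : G) ∈ P := by
    obtain ⟨H, hH⟩ := hP2
    have : (1 : G) ∈ (H : Set G) := H.one_mem
    rw [hH] at this
    exact this.1
  refine ⟨fun x => by simpa using hone, ?_, ?_, ?_, ?_⟩
  · intro x y z hxy hyz
    have := hP1 _ hxy _ hyz
    simpa [mul_assoc] using this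
  · intro g x y h
    simpa [mul_assoc] using h
  · intro x y z hy hz
    have := hP4 _ hy _ hz
    have e : y⁻¹ * x * (z⁻¹ * x)⁻¹ = y⁻¹ * z := by group
    rw [e] at this
    rcases this with h | h
    · exact Or.inl h
    · right; simpa using h
  · intro x y
    obtain ⟨a, b, ha, hb, hab⟩ := hP3 (y⁻¹ * x)
    refine ⟨y * a, ?_, ?_⟩
    · have : (y * a)⁻¹ * x = b := by
        rw [mul_inv_rev, mul_assoc]
        have : y⁻¹ * x = a * b := hab
        rw [this]; group
      rw [this]; exact hb
    · simpa using ha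
end

section
/- Let G be a group with a semilinear left preorder with positive cone P satisfying (P1) P·P ⊆ P, (P4) P·P⁻¹ ⊆ P ∪ P⁻¹, and e ∈ P. Then for any q ∈ P, q(P ∪ P⁻¹)q⁻¹ ⊆ P ∪ P⁻¹. -/
theorem stmt_5 {G : Type*} [Group G] (P : Set G)
    (h1 : (1 : G) ∈ P)
    (hP1 : ∀ a ∈ P, ∀ b ∈ P, a * b ∈ P)
    (hP4 : ∀ x ∈ P, ∀ y ∈ P, x * y⁻¹ ∈ P ∨ (x * y⁻¹)⁻¹ ∈ P) :
    ∀ q ∈ P, ∀ x : G, (x ∈ P ∨ x⁻¹ ∈ P) →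
      (q * x * q⁻¹ ∈ P ∨ (q * x * q⁻¹)⁻¹ ∈ P) := by
  intro q hq x hx
  rcases hx with hx | hx
  · exact hP4 _ (hP1 q hq x hx) _ hq
  · have := hP4 _ (hP1 q hq _ hx) _ hq
    have e : q * x⁻¹ * q⁻¹ = (q * x * q⁻¹)⁻¹ := by group
    rw [e] at this
    simpa [or_comm] using this
end

section
/- Let G be a group with a semilinear left preorder ≼ with positive cone P and let H = P ∩ P⁻¹. If g₁, ..., gₙ ∈ P and the product w = g₁·g₂·⋯·gₙ lies in H, then every gᵢ lies in H. -/
/-!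
Left invariance makes `≼` a preorder for which left multiplication is monotone. In such a group,
if `1 ≼ a`, `1 ≼ b` and `a * b ≼ 1`, then `a ≼ a * b ≼ 1`, and `b ≼ a⁻¹ ≼ 1` after multiplying
by `a⁻¹` on the left. Peeling off the first factor of the product and using that the product of
the remaining ones is still positive, induction on the list shows that every factor is `≼ 1`.
-/

section LeftOrderedGroup

variable {G : Type*} [Group G] [Preorder G] [MulLeftMono G]

theorem le_one_and_le_one_of_mul_le_one {a b : G} (ha : 1 ≤ a) (hb : 1 ≤ b) (h : a * b ≤ 1) :
    a ≤ 1 ∧ b ≤ 1 :=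
  have hb_le : b ≤ a⁻¹ := by rwa [← mul_one a⁻¹, le_inv_mul_iff_mul_le]
  ⟨(le_mul_of_one_le_right' hb).trans h, hb_le.trans (Left.inv_le_one_iff.mpr ha)⟩

theorem List.le_one_of_prod_le_one {l : List G} (hl : ∀ g ∈ l, 1 ≤ g) (h : l.prod ≤ 1) :
    ∀ g ∈ l, g ≤ 1 := by
  induction l with
  | nil => simp
  | cons a t ih =>
    rw [List.forall_mem_cons] at hl ⊢
    rw [List.prod_cons] at h
    obtain ⟨ha, ht⟩ := le_one_and_le_one_of_mul_le_one hl.1 (List.one_le_prod_of_one_le hl.2) h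
    exact ⟨ha, ih hl.2 ht⟩

end LeftOrderedGroup

theorem stmt_7_general {G : Type*} [Group G] (r : G → G → Prop)
    (hrefl : ∀ x, r x x)
    (htrans : ∀ x y z, r x y → r y z → r x z)
    (hlinv : ∀ g x y, r x y → r (g * x) (g * y))
    (l : List G) (hl : ∀ g ∈ l, r 1 g)
    (hw : r 1 l.prod ∧ r 1 l.prod⁻¹) :
    ∀ g ∈ l, r 1 g ∧ r 1 g⁻¹ := by
  let _ : Preorder G := { le := r, le_refl := hrefl, le_trans := htrans }
  have : MulLeftMono G := ⟨fun g _ _ h => hlinv g _ _ h⟩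
  have hprod : l.prod ≤ 1 := Left.one_le_inv_iff.mp hw.2
  intro g hg
  exact ⟨hl g hg, Left.one_le_inv_iff.mpr (l.le_one_of_prod_le_one hl hprod g hg)⟩

theorem stmt_7 {G : Type*} [Group G] (r : G → G → Prop)
    (hrefl : ∀ x, r x x)
    (htrans : ∀ x y z, r x y → r y z → r x z)
    (hlinv : ∀ g x y, r x y → r (g * x) (g * y))
    (hO6 : ∀ x y z, r y x → r z x → (r y z ∨ r z y))
    (hO7 : ∀ x y, ∃ z, r z x ∧ r z y)
    (l : List G) (hl : ∀ g ∈ l, r 1 g)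
    (hw : r 1 l.prod ∧ r 1 l.prod⁻¹) :
    ∀ g ∈ l, r 1 g ∧ r 1 g⁻¹ :=
  stmt_7_general r hrefl htrans hlinv l hl hw
end

section
/- Let G be a group with a semilinear left preorder ≼, positive cone P, H = P ∩ P⁻¹, and define H̃ = ⋃_{p ∈ P} ⋂_{q : q⁻¹ ≼ p⁻¹} q⁻¹Hq. Then H̃ is a normal subgroup of G. -/
theorem stmt_8 {G : Type*} [Group G] (r : G → G → Prop)
    (hrefl : ∀ x, r x x)
    (htrans : ∀ x y z, r x y → r y z → r x z)
    (hlinv : ∀ g x y, r x y → r (g * x) (g * y))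
    (hO6 : ∀ x y z, r y x → r z x → (r y z ∨ r z y))
    (hO7 : ∀ x y, ∃ z, r z x ∧ r z y) :
    ∃ N : Subgroup G, N.Normal ∧
      (N : Set G) = {x : G | ∃ p : G, r 1 p ∧
        ∀ q : G, r q⁻¹ p⁻¹ → ∃ h : G, (r 1 h ∧ r 1 h⁻¹) ∧ x = q⁻¹ * h * q} := by
  -- basic translation facts
  have hinv1 : ∀ b : G, r 1 b → r b⁻¹ 1 := fun b hb => by
    simpa using hlinv b⁻¹ 1 b hb
  have hinv2 : ∀ b : G, r b 1 → r 1 b⁻¹ := fun b hb => by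
    simpa using hlinv b⁻¹ b 1 hb
  have hmulH : ∀ h h' : G, (r 1 h ∧ r 1 h⁻¹) → (r 1 h' ∧ r 1 h'⁻¹) →
      (r 1 (h * h') ∧ r 1 (h * h')⁻¹) := by
    intro h h' ⟨h1, h2⟩ ⟨h1', h2'⟩
    constructor
    · exact htrans 1 h (h * h') h1 (by simpa using hlinv h 1 h' h1')
    · have : r h'⁻¹ (h'⁻¹ * h⁻¹) := by simpa using hlinv h'⁻¹ 1 h⁻¹ h2
      simpa [mul_inv_rev] using htrans 1 h'⁻¹ (h'⁻¹ * h⁻¹) h2' this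
  let S : Set G := {x : G | ∃ p : G, r 1 p ∧
        ∀ q : G, r q⁻¹ p⁻¹ → ∃ h : G, (r 1 h ∧ r 1 h⁻¹) ∧ x = q⁻¹ * h * q}
  refine ⟨{ carrier := S
            one_mem' := ?_
            mul_mem' := ?_
            inv_mem' := ?_ }, ⟨?_⟩, rfl⟩
  · rintro a b ⟨p₁, hp₁, ha⟩ ⟨p₂, hp₂, hb⟩
    obtain ⟨z, hz1, hz2⟩ := hO7 p₁⁻¹ p₂⁻¹
    have hp₁' : r p₁⁻¹ 1 := by simpa using hinv1 p₁ hp₁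
    have hz0 : r z 1 := htrans z p₁⁻¹ 1 hz1 hp₁'
    refine ⟨z⁻¹, by simpa using hinv2 z hz0, fun q hq => ?_⟩
    rw [inv_inv] at hq
    obtain ⟨h, hH, hae⟩ := ha q (htrans q⁻¹ z p₁⁻¹ hq hz1)
    obtain ⟨h', hH', hbe⟩ := hb q (htrans q⁻¹ z p₂⁻¹ hq hz2)
    refine ⟨h * h', hmulH h h' hH hH', ?_⟩
    rw [hae, hbe]; group
  · exact ⟨1, hrefl 1, fun q hq => ⟨1, ⟨hrefl 1, by simpa using hrefl 1⟩, by group⟩⟩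
  · rintro a ⟨p, hp, ha⟩
    refine ⟨p, hp, fun q hq => ?_⟩
    obtain ⟨h, ⟨h1, h2⟩, hae⟩ := ha q hq
    refine ⟨h⁻¹, ⟨h2, by simpa using h1⟩, ?_⟩
    rw [hae]; group
  · rintro n ⟨p, hp, hn⟩ g
    obtain ⟨z, hz1, hz2⟩ := hO7 (g * p⁻¹) 1
    refine ⟨z⁻¹, by simpa using hinv2 z hz2, fun q hq => ?_⟩
    rw [inv_inv] at hq
    have h1 : r (g⁻¹ * q⁻¹) (g⁻¹ * z) := hlinv g⁻¹ q⁻¹ z hq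
    have h2 : r (g⁻¹ * z) p⁻¹ := by simpa [mul_assoc] using hlinv g⁻¹ z (g * p⁻¹) hz1
    have h3 : r (q * g)⁻¹ p⁻¹ := by
      simpa [mul_inv_rev] using htrans (g⁻¹ * q⁻¹) (g⁻¹ * z) p⁻¹ h1 h2
    obtain ⟨h, hH, hne⟩ := hn (q * g) h3
    refine ⟨h, hH, ?_⟩
    rw [hne]; group
end

section
/- Let G be a finitely generated group with a semilinear left preorder ≼, positive cone P, H = P ∩ P⁻¹, and H̃ = ⋃_{p ∈ P} ⋂_{q⁻¹ ≼ p⁻¹} q⁻¹Hq. If H ≠ G, then H̃ ≠ G. -/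
theorem stmt_9 {G : Type*} [Group G] (hFG : Group.FG G) (r : G → G → Prop)
    (hrefl : ∀ x, r x x)
    (htrans : ∀ x y z, r x y → r y z → r x z)
    (hlinv : ∀ g x y, r x y → r (g * x) (g * y))
    (hO6 : ∀ x y z, r y x → r z x → (r y z ∨ r z y))
    (hO7 : ∀ x y, ∃ z, r z x ∧ r z y)
    (hH : {g : G | r 1 g ∧ r 1 g⁻¹} ≠ Set.univ) :
    {x : G | ∃ p : G, r 1 p ∧
      ∀ q : G, r q⁻¹ p⁻¹ → ∃ h : G, (r 1 h ∧ r 1 h⁻¹) ∧ x = q⁻¹ * h * q}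
      ≠ Set.univ := by
  intro hcontra
  -- inverses of positive elements are ≼ 1
  have hPinv : ∀ p : G, r 1 p → r p⁻¹ 1 := by
    intro p h
    have := hlinv p⁻¹ 1 p h
    simpa using this
  -- inverses of positive elements are comparable
  have hcmp : ∀ p p' : G, r 1 p → r 1 p' → r p⁻¹ p'⁻¹ ∨ r p'⁻¹ p⁻¹ := by
    intro p p' hp hp'
    exact hO6 1 p⁻¹ p'⁻¹ (hPinv p hp) (hPinv p' hp')
  obtain ⟨S, hS⟩ := hFG.1
  have hmem : ∀ x : G, ∃ p : G, r 1 p ∧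
      ∀ q : G, r q⁻¹ p⁻¹ → ∃ h : G, (r 1 h ∧ r 1 h⁻¹) ∧ x = q⁻¹ * h * q := by
    intro x
    have : x ∈ ({x : G | ∃ p : G, r 1 p ∧
      ∀ q : G, r q⁻¹ p⁻¹ → ∃ h : G, (r 1 h ∧ r 1 h⁻¹) ∧ x = q⁻¹ * h * q}) := by
      rw [hcontra]; trivial
    exact this
  -- a common witness p for all generators
  have hstep : ∀ T : Finset G, ∃ p : G, r 1 p ∧ ∀ s ∈ T, ∀ q : G, r q⁻¹ p⁻¹ →
      ∃ h : G, (r 1 h ∧ r 1 h⁻¹) ∧ s = q⁻¹ * h * q := by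
    classical
    intro T
    induction T using Finset.induction_on with
    | empty => exact ⟨1, hrefl 1, by simp⟩
    | @insert a T ha ih =>
      obtain ⟨p, hp, hM⟩ := ih
      obtain ⟨pa, hpa, hMa⟩ := hmem a
      rcases hcmp p pa hp hpa with hle | hle
      · refine ⟨p, hp, ?_⟩
        intro s hs q hq
        rcases Finset.mem_insert.mp hs with rfl | hs
        · exact hMa q (htrans _ _ _ hq hle)
        · exact hM s hs q hq
      · refine ⟨pa, hpa, ?_⟩
        intro s hs q hq
        rcases Finset.mem_insert.mp hs with rfl | hs
        · exact hMa q hq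
        · exact hM s hs q (htrans _ _ _ hq hle)
  obtain ⟨p, hp, hMp⟩ := hstep S
  -- K is a subgroup
  let K : Subgroup G :=
    { carrier := {x : G | ∀ q : G, r q⁻¹ p⁻¹ →
        ∃ h : G, (r 1 h ∧ r 1 h⁻¹) ∧ x = q⁻¹ * h * q}
      one_mem' := by
        intro q hq
        exact ⟨1, ⟨hrefl 1, by simpa using hrefl 1⟩, by group⟩
      mul_mem' := by
        intro x y hx hy q hq
        obtain ⟨h, ⟨hh1, hh2⟩, rfl⟩ := hx q hq
        obtain ⟨h', ⟨hh1', hh2'⟩, rfl⟩ := hy q hq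
        refine ⟨h * h', ⟨?_, ?_⟩, by group⟩
        · exact htrans 1 h (h * h') hh1 (by simpa using hlinv h 1 h' hh1')
        · have : r h'⁻¹ (h'⁻¹ * h⁻¹) := by simpa using hlinv h'⁻¹ 1 h⁻¹ hh2
          have := htrans 1 h'⁻¹ (h'⁻¹ * h⁻¹) hh2' this
          simpa [mul_inv_rev] using this
      inv_mem' := by
        intro x hx q hq
        obtain ⟨h, ⟨hh1, hh2⟩, rfl⟩ := hx q hq
        exact ⟨h⁻¹, ⟨hh2, by simpa using hh1⟩, by group⟩ }
  have hKall : ∀ x : G, x ∈ K := by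
    have hle : Subgroup.closure (S : Set G) ≤ K :=
      (Subgroup.closure_le K).mpr (fun s hs => hMp s hs)
    intro x
    exact hle (hS ▸ Subgroup.mem_top x)
  obtain ⟨g, hg⟩ := (Set.ne_univ_iff_exists_notMem _).mp hH
  obtain ⟨h, hh, heq⟩ := hKall (p⁻¹ * g * p) p (hrefl p⁻¹)
  apply hg
  have : g = h := by
    have := heq
    group at this
    -- p⁻¹ * g * p = p⁻¹ * h * p implies g = h
    exact mul_left_cancel (mul_right_cancel this)
  rw [this]
  exact hh
end

section
/- Let G be a group with a semilinear left preorder ≼, positive cone P, H = P ∩ P⁻¹, H̃ = ⋃_{p ∈ P} ⋂_{q⁻¹ ≼ p⁻¹} q⁻¹Hq. Then the quotient group G/H̃ is left-orderable, i.e., admits a total order invariant under left multiplication. -/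
/-!
Let `U` be an ultrafilter refining `atBot`. Germs along `U` of maps `G → G` bounded by a left
translation `t ↦ c * t` are eventually `≤ 1`, so by (O6) any two of them are comparable, and `G`
acts on this total preorder by left multiplication. An element acts trivially exactly when it
fixes (up to `H`) every sufficiently small `u`, i.e. when it lies in `H̃`. Comparing two cosets of
`H̃` lexicographically, along a well-order of the germs, gives a left-invariant linear order.
-/

open Filter

theorem QuotientGroup.exists_leftInvariant_linearOrder_of_pi {G ι β : Type*} [Group G]
    [LinearOrder β] (N : Subgroup G) [N.Normal] (Φ : G → ι → β)
    (hΦ : ∀ a b, Φ a = Φ b ↔ a⁻¹ * b ∈ N)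
    (hmono : ∀ k a b i, Φ a i ≤ Φ b i → Φ (k * a) i ≤ Φ (k * b) i) :
    ∃ lin : LinearOrder (G ⧸ N), ∀ g x y : G ⧸ N, lin.le x y → lin.le (g * x) (g * y) := by
  obtain ⟨_, _⟩ := exists_wellFoundedLT ι
  have hlt (k a b : G) (h : toLex (Φ a) < toLex (Φ b)) :
      toLex (Φ (k * a)) < toLex (Φ (k * b)) := by
    obtain ⟨i, heq, hi⟩ := h
    refine ⟨i, fun j hj => ?_, lt_of_not_ge fun h => hi.not_ge ?_⟩
    · exact le_antisymm (hmono k _ _ j (heq j hj).le) (hmono k _ _ j (heq j hj).ge)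
    · simpa using hmono k⁻¹ _ _ i h
  let Ψ : G ⧸ N → Lex (ι → β) := Quotient.lift (fun g => toLex (Φ g)) fun a b h =>
    congrArg toLex ((hΦ a b).2 (QuotientGroup.leftRel_apply.1 h))
  have hΨ : Function.Injective Ψ := by
    rintro ⟨a⟩ ⟨b⟩ h
    exact Quotient.sound' (QuotientGroup.leftRel_apply.2 ((hΦ a b).1 h))
  refine ⟨LinearOrder.lift' Ψ hΨ, ?_⟩
  rintro ⟨k⟩ ⟨a⟩ ⟨b⟩ h
  change toLex (Φ a) ≤ toLex (Φ b) at h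
  change toLex (Φ (k * a)) ≤ toLex (Φ (k * b))
  rcases h.lt_or_eq with h | h
  · exact (hlt k a b h).le
  · have hab := (hΦ a b).1 (toLex.injective h)
    refine (congrArg toLex ((hΦ _ _).2 ?_)).le
    simpa [mul_assoc] using hab

theorem QuotientGroup.exists_leftInvariant_linearOrder_of_mulAction {G X : Type*} [Group G]
    [Preorder X] [Std.Total (α := X) (· ≤ ·)] [MulAction G X]
    (hmono : ∀ (g : G) (x y : X), x ≤ y → g • x ≤ g • y) (N : Subgroup G) [N.Normal]
    (hN : ∀ g, g ∈ N ↔ ∀ x : X, AntisymmRel (· ≤ ·) (g • x) x) :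
    ∃ lin : LinearOrder (G ⧸ N), ∀ g x y : G ⧸ N, lin.le x y → lin.le (g * x) (g * y) := by
  classical
  have smul_antisymmRel_iff (g : G) (x y : X) :
      AntisymmRel (· ≤ ·) (g • x) (g • y) ↔ AntisymmRel (· ≤ ·) x y :=
    ⟨fun h => by simpa using h.image (hmono g⁻¹), fun h => h.image (hmono g)⟩
  refine exists_leftInvariant_linearOrder_of_pi (β := Antisymmetrization X (· ≤ ·)) N
    (fun g x => toAntisymmetrization (· ≤ ·) (g • x)) (fun a b => ?_) fun k a b x h => ?_
  · rw [hN, funext_iff]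
    refine forall_congr' fun x => ?_
    rw [le_antisymm_iff, toAntisymmetrization_le_toAntisymmetrization_iff,
      toAntisymmetrization_le_toAntisymmetrization_iff, ← smul_antisymmRel_iff a, smul_smul,
      mul_inv_cancel_left, antisymmRel_comm]
    rfl
  · rw [toAntisymmetrization_le_toAntisymmetrization_iff] at h ⊢
    simpa only [mul_smul] using hmono k _ _ h

namespace Filter.Germ

variable {α β : Type*} {l : Filter α}

theorem smul_le_smul_left [Mul β] [LE β] [MulLeftMono β] (c : β) {x y : Germ l β} (h : x ≤ y) :
    c • x ≤ c • y := by
  induction x using Germ.inductionOn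
  induction y using Germ.inductionOn
  rw [← coe_smul, ← coe_smul, coe_le] at *
  exact h.mono fun t ht => mul_le_mul_right ht c

theorem le_total_of_le_of_le [Preorder β]
    (hβ : ∀ a b c : β, b ≤ a → c ≤ a → b ≤ c ∨ c ≤ b) {U : Ultrafilter α}
    {x y z : Germ (U : Filter α) β} (hx : x ≤ z) (hy : y ≤ z) : x ≤ y ∨ y ≤ x := by
  induction x using Germ.inductionOn
  induction y using Germ.inductionOn
  induction z using Germ.inductionOn
  rw [coe_le] at hx hy
  rw [coe_le, coe_le]
  exact Ultrafilter.eventually_or.1 <| by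
    filter_upwards [hx, hy] with t hxt hyt using hβ _ _ _ hxt hyt

end Filter.Germ

section Semilinear

variable {G : Type*} [Group G] [Preorder G] [MulLeftMono G]

def dominatedGerms (l : Filter G) : SubMulAction G (Germ l G) where
  carrier := {x | ∃ c : G, x ≤ ↑(c * ·)}
  smul_mem' g x := by
    rintro ⟨c, hc⟩
    refine ⟨g * c, ?_⟩
    simpa only [← Germ.coe_smul, Pi.smul_def, smul_eq_mul, mul_assoc] using
      Germ.smul_le_smul_left g hc

theorem le_one_of_mem_dominatedGerms {l : Filter G} (hl : l ≤ atBot) {x : Germ l G}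
    (hx : x ∈ dominatedGerms l) : x ≤ ↑(1 : G) := by
  obtain ⟨c, hc⟩ := hx
  refine hc.trans (Germ.coe_le.2 (hl ?_))
  filter_upwards [eventually_le_atBot c⁻¹] with t ht
  simpa using mul_le_mul_right ht c

theorem dominatedGerms_le_total {U : Ultrafilter G} (hU : (U : Filter G) ≤ atBot)
    (hO6 : ∀ a b c : G, b ≤ a → c ≤ a → b ≤ c ∨ c ≤ b) (x y : dominatedGerms (U : Filter G)) :
    x ≤ y ∨ y ≤ x :=
  Germ.le_total_of_le_of_le hO6 (le_one_of_mem_dominatedGerms hU x.2)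
    (le_one_of_mem_dominatedGerms hU y.2)

theorem forall_smul_antisymmRel_dominatedGerms_iff [IsCodirectedOrder G] {U : Ultrafilter G}
    (hU : (U : Filter G) ≤ atBot) (g : G) :
    (∀ x ∈ dominatedGerms (U : Filter G), AntisymmRel (· ≤ ·) (g • x) x) ↔
      ∀ᶠ u in atBot, AntisymmRel (· ≤ ·) (g * u) u := by
  constructor
  · intro h
    by_contra hg
    obtain ⟨f, hf⟩ : ∃ f : G → G, ∀ s, f s ≤ s ∧ ¬ AntisymmRel (· ≤ ·) (g * f s) (f s) := by
      simpa [eventually_atBot, Classical.skolem] using hg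
    have hfix := h f ⟨1, Germ.coe_le.2 (Eventually.of_forall fun t => by simpa using (hf t).1)⟩
    rw [← Germ.coe_smul] at hfix
    obtain ⟨t, ht⟩ := (Germ.coe_le.1 hfix.1 |>.and (Germ.coe_le.1 hfix.2)).exists
    exact (hf t).2 ht
  · intro hg x hx
    induction x using Germ.inductionOn with | h f => ?_
    obtain ⟨c, hc⟩ := hx
    obtain ⟨s, hs⟩ := eventually_atBot.1 hg
    have : ∀ᶠ t in (U : Filter G), AntisymmRel (· ≤ ·) (g * f t) (f t) := by
      filter_upwards [Germ.coe_le.1 hc, hU (eventually_le_atBot (c⁻¹ * s))] with t hft ht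
      exact hs _ (hft.trans (by simpa using mul_le_mul_right ht c))
    rw [← Germ.coe_smul]
    exact ⟨Germ.coe_le.2 (this.mono fun _ h => h.1), Germ.coe_le.2 (this.mono fun _ h => h.2)⟩

theorem antisymmRel_mul_iff_exists_conj (g u : G) :
    AntisymmRel (· ≤ ·) (g * u) u ↔ ∃ h : G, (1 ≤ h ∧ 1 ≤ h⁻¹) ∧ g = u * h * u⁻¹ := by
  constructor
  · rintro ⟨hle, hge⟩
    refine ⟨u⁻¹ * g * u, ⟨?_, one_le_inv'.2 ?_⟩, by group⟩
    · simpa [mul_assoc] using mul_le_mul_right hge u⁻¹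
    · simpa [mul_assoc] using mul_le_mul_right hle u⁻¹
  · rintro ⟨h, ⟨h1, h2⟩, rfl⟩
    simp only [inv_mul_cancel_right]
    exact ⟨by simpa using mul_le_mul_right (one_le_inv'.1 h2) u,
      by simpa using mul_le_mul_right h1 u⟩

theorem eventually_atBot_antisymmRel_mul_iff [IsCodirectedOrder G] (g : G) :
    (∀ᶠ u in atBot, AntisymmRel (· ≤ ·) (g * u) u) ↔
      ∃ p, 1 ≤ p ∧ ∀ q, q⁻¹ ≤ p⁻¹ → ∃ h, (1 ≤ h ∧ 1 ≤ h⁻¹) ∧ g = q⁻¹ * h * q := by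
  simp only [eventually_atBot, antisymmRel_mul_iff_exists_conj]
  constructor
  · rintro ⟨s, hs⟩
    obtain ⟨w, hws, hw1⟩ := exists_le_le s 1
    exact ⟨w⁻¹, one_le_inv'.2 hw1, fun q hq => by
      simpa using hs q⁻¹ ((inv_inv w ▸ hq).trans hws)⟩
  · rintro ⟨p, -, hp⟩
    exact ⟨p⁻¹, fun u hu => by simpa using hp u⁻¹ (by simpa using hu)⟩

end Semilinear

theorem stmt_10 {G : Type*} [Group G] (r : G → G → Prop)
    (hrefl : ∀ x, r x x)
    (htrans : ∀ x y z, r x y → r y z → r x z)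
    (hlinv : ∀ g x y, r x y → r (g * x) (g * y))
    (hO6 : ∀ x y z, r y x → r z x → (r y z ∨ r z y))
    (hO7 : ∀ x y, ∃ z, r z x ∧ r z y)
    (N : Subgroup G) [N.Normal]
    (hN : (N : Set G) = {x : G | ∃ p : G, r 1 p ∧
      ∀ q : G, r q⁻¹ p⁻¹ → ∃ h : G, (r 1 h ∧ r 1 h⁻¹) ∧ x = q⁻¹ * h * q}) :
    ∃ lin : LinearOrder (G ⧸ N),
      ∀ g x y : G ⧸ N, lin.le x y → lin.le (g * x) (g * y) := by
  let _ : Preorder G := { le := r, le_refl := hrefl, le_trans := htrans }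
  have : MulLeftMono G := ⟨fun g _ _ h => hlinv g _ _ h⟩
  have : IsCodirectedOrder G := ⟨hO7⟩
  let U := Ultrafilter.of (atBot : Filter G)
  have hU : (U : Filter G) ≤ atBot := Ultrafilter.of_le _
  have : Std.Total (α := dominatedGerms (U : Filter G)) (· ≤ ·) :=
    ⟨dominatedGerms_le_total hU hO6⟩
  refine QuotientGroup.exists_leftInvariant_linearOrder_of_mulAction
    (X := dominatedGerms (U : Filter G)) (fun g x y h => Germ.smul_le_smul_left g h) N
    fun g => ?_
  calc g ∈ N ↔ ∃ p, 1 ≤ p ∧ ∀ q, q⁻¹ ≤ p⁻¹ → ∃ h, (1 ≤ h ∧ 1 ≤ h⁻¹) ∧ g = q⁻¹ * h * q := by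
        rw [← SetLike.mem_coe, hN]; rfl
    _ ↔ ∀ x ∈ dominatedGerms (U : Filter G), AntisymmRel (· ≤ ·) (g • x) x := by
        rw [forall_smul_antisymmRel_dominatedGerms_iff hU, eventually_atBot_antisymmRel_mul_iff]
    _ ↔ ∀ x : dominatedGerms (U : Filter G), AntisymmRel (· ≤ ·) (g • x) x :=
        ⟨fun h x => h x.1 x.2, fun h x hx => h ⟨x, hx⟩⟩
end

section
/- Let G be a group with a semilinear left preorder ≼, positive cone P, and H = P ∩ P⁻¹. If H̃ = ⋃_{p ∈ P} ⋂_{q⁻¹ ≼ p⁻¹} q⁻¹Hq, then for any x ∈ G \ H̃ and any positive integer k, we have x^k ∉ H̃. (In particular, G/H̃ is torsion-free when H̃ is normal.) -/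
private lemma chain_up {G : Type*} [Group G] (r : G → G → Prop)
    (hrefl : ∀ x, r x x)
    (htrans : ∀ x y z, r x y → r y z → r x z)
    (hlinv : ∀ g x y, r x y → r (g * x) (g * y))
    {x a : G} (h : r a (x * a)) : ∀ n : ℕ, r (x * a) (x ^ (n + 1) * a) := by
  intro n
  induction n with
  | zero => simpa using hrefl (x * a)
  | succ n ih =>
      refine htrans _ _ _ ih ?_
      have := hlinv (x ^ (n + 1)) _ _ h
      simpa [pow_succ, mul_assoc] using this

private lemma chain_down {G : Type*} [Group G] (r : G → G → Prop)
    (hrefl : ∀ x, r x x)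
    (htrans : ∀ x y z, r x y → r y z → r x z)
    (hlinv : ∀ g x y, r x y → r (g * x) (g * y))
    {x a : G} (h : r (x * a) a) : ∀ n : ℕ, r (x ^ (n + 1) * a) (x * a) := by
  intro n
  induction n with
  | zero => simpa using hrefl (x * a)
  | succ n ih =>
      refine htrans _ _ _ ?_ ih
      have := hlinv (x ^ (n + 1)) _ _ h
      simpa [pow_succ, mul_assoc] using this

private lemma chain_fix {G : Type*} [Group G] (r : G → G → Prop)
    (hrefl : ∀ x, r x x)
    (htrans : ∀ x y z, r x y → r y z → r x z)
    (hlinv : ∀ g x y, r x y → r (g * x) (g * y))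
    {x a : G} {k : ℕ} (hk : 1 ≤ k)
    (hcomp : r a (x * a) ∨ r (x * a) a)
    (h1 : r (x ^ k * a) a) (h2 : r a (x ^ k * a)) :
    r (x * a) a ∧ r a (x * a) := by
  obtain ⟨n, rfl⟩ : ∃ n, k = n + 1 := ⟨k - 1, (Nat.succ_pred_eq_of_pos hk).symm⟩
  rcases hcomp with hc | hc
  · exact ⟨htrans _ _ _ (chain_up r hrefl htrans hlinv hc n) h1, hc⟩
  · exact ⟨hc, htrans _ _ _ h2 (chain_down r hrefl htrans hlinv hc n)⟩

theorem stmt_11 {G : Type*} [Group G] (r : G → G → Prop)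
    (hrefl : ∀ x, r x x)
    (htrans : ∀ x y z, r x y → r y z → r x z)
    (hlinv : ∀ g x y, r x y → r (g * x) (g * y))
    (hO6 : ∀ x y z, r y x → r z x → (r y z ∨ r z y))
    (hO7 : ∀ x y, ∃ z, r z x ∧ r z y) :
    ∀ x : G, x ∉ {x : G | ∃ p : G, r 1 p ∧
        ∀ q : G, r q⁻¹ p⁻¹ → ∃ h : G, (r 1 h ∧ r 1 h⁻¹) ∧ x = q⁻¹ * h * q} →
      ∀ k : ℕ, 1 ≤ k →
        x ^ k ∉ {x : G | ∃ p : G, r 1 p ∧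
          ∀ q : G, r q⁻¹ p⁻¹ → ∃ h : G, (r 1 h ∧ r 1 h⁻¹) ∧ x = q⁻¹ * h * q} := by
  intro x hx k hk hxk
  apply hx
  obtain ⟨p, hp, hq⟩ := hxk
  -- key fact: for all a ≼ p⁻¹, x^k * a ~ a
  have key : ∀ a : G, r a p⁻¹ → r (x ^ k * a) a ∧ r a (x ^ k * a) := by
    intro a ha
    obtain ⟨h, ⟨hh1, hh2⟩, hceq⟩ := hq a⁻¹ (by simpa using ha)
    have hval : h = a⁻¹ * x ^ k * a := by
      rw [hceq]; group
    subst hval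
    constructor
    · -- from r 1 h⁻¹ : h⁻¹ = a⁻¹ * (x^k)⁻¹ * a
      have t1 := hlinv a _ _ hh2
      have t1' : r a ((x ^ k)⁻¹ * a) := by
        simpa [mul_assoc] using t1
      have t2 := hlinv (x ^ k) _ _ t1'
      simpa [mul_assoc] using t2
    · have t1 := hlinv a _ _ hh1
      simpa [mul_assoc] using t1
  -- find z ≼ p⁻¹ with z ≼ x⁻¹ * p⁻¹
  obtain ⟨z, hz1, hz2⟩ := hO7 p⁻¹ (x⁻¹ * p⁻¹)
  have hxz : r (x * z) p⁻¹ := by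
    have := hlinv x _ _ hz2
    simpa [mul_assoc] using this
  have hcompz : r z (x * z) ∨ r (x * z) z := hO6 p⁻¹ z (x * z) hz1 hxz
  obtain ⟨hk1, hk2⟩ := key z hz1
  obtain ⟨hzfix1, hzfix2⟩ := chain_fix r hrefl htrans hlinv hk hcompz hk1 hk2
  -- witness: p' = z⁻¹
  refine ⟨z⁻¹, ?_, ?_⟩
  · -- r 1 z⁻¹ : since z ≼ p⁻¹ ≼ 1
    have hp1 : r p⁻¹ 1 := by
      have := hlinv p⁻¹ _ _ hp
      simpa using this
    have hz0 : r z 1 := htrans _ _ _ hz1 hp1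
    have := hlinv z⁻¹ _ _ hz0
    simpa using this
  · intro q hqz
    have ha : r q⁻¹ z := by simpa using hqz
    -- x * q⁻¹ ≼ x * z ≼ z
    have hxa : r (x * q⁻¹) z := by
      have := hlinv x _ _ ha
      exact htrans _ _ _ this hzfix1
    have hcomp : r q⁻¹ (x * q⁻¹) ∨ r (x * q⁻¹) q⁻¹ := hO6 z q⁻¹ (x * q⁻¹) ha hxa
    have hap : r q⁻¹ p⁻¹ := htrans _ _ _ ha hz1
    obtain ⟨hk1', hk2'⟩ := key q⁻¹ hap
    obtain ⟨hfix1, hfix2⟩ := chain_fix r hrefl htrans hlinv hk hcomp hk1' hk2'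
    refine ⟨q * x * q⁻¹, ⟨?_, ?_⟩, by group⟩
    · have := hlinv q _ _ hfix2
      simpa [mul_assoc] using this
    · have t1 := hlinv x⁻¹ _ _ hfix1
      have t1' : r q⁻¹ (x⁻¹ * q⁻¹) := by simpa [mul_assoc] using t1
      have := hlinv q _ _ t1'
      simpa [mul_assoc] using this
end

section
/- Let G be a group and suppose there is a map ε : G \ N → {-1, 1}, where N is a normal subgroup, such that for any finite subset {g₁, ..., gₙ} ⊆ G \ N, the subsemigroup generated by g₁^{ε(g₁)}, ..., gₙ^{ε(gₙ)} is disjoint from N. Then P̃ = {g ∈ G \ N : ε(g) = 1} is a subsemigroup of G and G = P̃ ∪ N ∪ P̃⁻¹. -/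
theorem stmt_13 {G : Type*} [Group G] (N : Subgroup G) [N.Normal]
    (ε : G → ℤ)
    (hε : ∀ g : G, g ∉ N → ε g = 1 ∨ ε g = -1)
    (hsgr : ∀ S : Finset G, (↑S : Set G) ⊆ {g : G | g ∉ N} →
      ∀ x ∈ Subsemigroup.closure ((fun g => g ^ ε g) '' ↑S), x ∉ N) :
    (∀ a ∈ {g : G | g ∉ N ∧ ε g = 1}, ∀ b ∈ {g : G | g ∉ N ∧ ε g = 1},
      a * b ∈ {g : G | g ∉ N ∧ ε g = 1}) ∧
    (∀ g : G, g ∈ {g : G | g ∉ N ∧ ε g = 1} ∨ g ∈ N ∨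
      g⁻¹ ∈ {g : G | g ∉ N ∧ ε g = 1}) := by
  classical
  -- key: membership of g^(ε g) in the image of a finset containing g
  have himg : ∀ (S : Finset G) (g : G), g ∈ S →
      g ^ ε g ∈ Subsemigroup.closure ((fun g => g ^ ε g) '' (↑S : Set G)) := by
    intro S g hg
    exact Subsemigroup.subset_closure ⟨g, by simpa using hg, rfl⟩
  -- not both ε g and ε g⁻¹ equal, for g ∉ N
  have key : ∀ g : G, g ∉ N → ¬ (ε g = ε g⁻¹) := by
    intro g hg heq
    have hginv : g⁻¹ ∉ N := fun h => hg (by simpa using N.inv_mem h)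
    set S : Finset G := {g, g⁻¹} with hS
    have hsub : (↑S : Set G) ⊆ {g : G | g ∉ N} := by
      intro x hx
      simp only [hS, Finset.coe_insert, Finset.coe_singleton, Set.mem_insert_iff,
        Set.mem_singleton_iff] at hx
      rcases hx with rfl | rfl <;> assumption
    have h1 : g ^ ε g ∈ Subsemigroup.closure ((fun g => g ^ ε g) '' (↑S : Set G)) :=
      himg S g (by simp [hS])
    have h2 : g⁻¹ ^ ε g⁻¹ ∈ Subsemigroup.closure ((fun g => g ^ ε g) '' (↑S : Set G)) :=
      himg S g⁻¹ (by simp [hS])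
    have hone : (1 : G) ∈ Subsemigroup.closure ((fun g => g ^ ε g) '' (↑S : Set G)) := by
      have := mul_mem h1 h2
      rwa [← heq, inv_zpow, mul_inv_cancel] at this
    exact hsgr S hsub 1 hone (one_mem N)
  have einv : ∀ g : G, g ∉ N → ε g = -1 → ε g⁻¹ = 1 := by
    intro g hg h
    have hginv : g⁻¹ ∉ N := fun h' => hg (by simpa using N.inv_mem h')
    rcases hε g⁻¹ hginv with h' | h'
    · exact h'
    · exact absurd (h.trans h'.symm) (key g hg)
  constructor
  · rintro a ⟨ha, hea⟩ b ⟨hb, heb⟩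
    -- a * b ∉ N
    have hab : a * b ∉ N := by
      set S : Finset G := {a, b} with hS
      have hsub : (↑S : Set G) ⊆ {g : G | g ∉ N} := by
        intro x hx
        simp only [hS, Finset.coe_insert, Finset.coe_singleton, Set.mem_insert_iff,
          Set.mem_singleton_iff] at hx
        rcases hx with rfl | rfl <;> assumption
      have h1 := himg S a (by simp [hS])
      have h2 := himg S b (by simp [hS])
      rw [hea, zpow_one] at h1
      rw [heb, zpow_one] at h2
      exact hsgr S hsub (a * b) (mul_mem h1 h2)
    refine ⟨hab, ?_⟩
    by_contra hne
    rcases hε (a * b) hab with h | h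
    · exact hne h
    · have hinv1 : ε (a * b)⁻¹ = 1 := einv _ hab h
      have habinv : (a * b)⁻¹ ∉ N := fun h' => hab (by simpa using N.inv_mem h')
      set S : Finset G := {a, b, (a * b)⁻¹} with hS
      have hsub : (↑S : Set G) ⊆ {g : G | g ∉ N} := by
        intro x hx
        simp only [hS, Finset.coe_insert, Finset.coe_singleton, Set.mem_insert_iff,
          Set.mem_singleton_iff] at hx
        rcases hx with rfl | rfl | rfl <;> assumption
      have h1 := himg S a (by simp [hS])
      have h2 := himg S b (by simp [hS])
      have h3 := himg S (a * b)⁻¹ (by simp [hS])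
      rw [hea, zpow_one] at h1
      rw [heb, zpow_one] at h2
      rw [hinv1, zpow_one] at h3
      have hone : (1 : G) ∈ Subsemigroup.closure ((fun g => g ^ ε g) '' (↑S : Set G)) := by
        have := mul_mem (mul_mem h1 h2) h3
        rwa [mul_inv_cancel] at this
      exact hsgr S hsub 1 hone (one_mem N)
  · intro g
    by_cases hg : g ∈ N
    · exact Or.inr (Or.inl hg)
    rcases hε g hg with h | h
    · exact Or.inl ⟨hg, h⟩
    · refine Or.inr (Or.inr ⟨fun h' => hg (by simpa using N.inv_mem h'), einv g hg h⟩)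
end
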